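/- Let α, β, θ > 0, let λ ∈ [−1,1] with λ ≠ 0, and let p ∈ (0,1). Set A = ((1+λ) − sqrt((1+λ)² − 4pλ))/(2λ) and Q(p) = (log(1 − (1/β)·log(1 − A^{1/θ})))^{1/α}. Then Q(p) > 0 and F(Q(p)) = p, where F is the CDF of the generalized transmuted Weibull extension distribution. -/

import Mathlib

/-!
The CDF is `(1 + λ) y - λ y²` with `y = G(x)^θ`, where `G(x) = 1 - exp(-β(exp(x^α) - 1))` is the
Weibull extension CDF, so it is inverted in two layers. For the quadratic, the discriminant
`D = (1 + λ)² - 4pλ` satisfies `D - (1 + λ)² = -4pλ` and `D - (1 - λ)² = 4λ(1 - p)`; comparing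
`√D` with `1 ± λ` according to the sign of `λ` puts the root `A = ((1 + λ) - √D)/(2λ)` in `(0, 1)`.
Then `G` is inverted in closed form at `A^{1/θ}`.
-/

open Real

noncomputable section

def transmutedQuantile (lam p : ℝ) : ℝ :=
  ((1 + lam) - √((1 + lam) ^ 2 - 4 * p * lam)) / (2 * lam)

def weibullExtQuantile (α β u : ℝ) : ℝ :=
  (log (1 - (1 / β) * log (1 - u))) ^ (1 / α)

end

section Transmuted

variable {lam p : ℝ}

lemma transmuted_discrim_nonneg (hp0 : 0 ≤ p) (hp1 : p ≤ 1) :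
    0 ≤ (1 + lam) ^ 2 - 4 * p * lam := by
  have hconvex : (1 + lam) ^ 2 - 4 * p * lam = (1 - p) * (1 + lam) ^ 2 + p * (1 - lam) ^ 2 := by
    ring
  rw [hconvex]
  have := mul_nonneg (sub_nonneg.2 hp1) (sq_nonneg (1 + lam))
  have := mul_nonneg hp0 (sq_nonneg (1 - lam))
  linarith

lemma transmutedQuantile_pos (hlam : lam ≠ 0) (hp0 : 0 < p) (hp1 : p < 1) :
    0 < transmutedQuantile lam p := by
  set s := √((1 + lam) ^ 2 - 4 * p * lam)
  have hs0 : 0 ≤ s := sqrt_nonneg _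
  have hs2 : s ^ 2 = (1 + lam) ^ 2 - 4 * p * lam :=
    sq_sqrt (transmuted_discrim_nonneg hp0.le hp1.le)
  rcases hlam.lt_or_gt with hneg | hpos
  · exact div_pos_of_neg_of_neg (by nlinarith) (by linarith)
  · exact div_pos (by nlinarith) (by linarith)

lemma transmutedQuantile_lt_one (hlam : lam ≠ 0) (hp0 : 0 ≤ p) (hp1 : p < 1) :
    transmutedQuantile lam p < 1 := by
  set s := √((1 + lam) ^ 2 - 4 * p * lam)
  have hs0 : 0 ≤ s := sqrt_nonneg _
  have hs2 : s ^ 2 = (1 + lam) ^ 2 - 4 * p * lam :=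
    sq_sqrt (transmuted_discrim_nonneg hp0 hp1.le)
  rcases hlam.lt_or_gt with hneg | hpos
  · exact (div_lt_one_of_neg (by linarith)).2 (by nlinarith)
  · exact (div_lt_one (by linarith)).2 (by nlinarith)

lemma transmuted_transmutedQuantile (hlam : lam ≠ 0) (hp0 : 0 ≤ p) (hp1 : p ≤ 1) :
    (1 + lam) * transmutedQuantile lam p - lam * transmutedQuantile lam p ^ 2 = p := by
  unfold transmutedQuantile
  set s := √((1 + lam) ^ 2 - 4 * p * lam)
  have hs2 : s ^ 2 = (1 + lam) ^ 2 - 4 * p * lam :=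
    sq_sqrt (transmuted_discrim_nonneg hp0 hp1)
  field_simp
  linear_combination -hs2

end Transmuted

section WeibullExtension

variable {α β u : ℝ}

lemma one_le_one_sub_div_mul_log (hβ : 0 < β) (hu0 : 0 ≤ u) (hu1 : u < 1) :
    1 ≤ 1 - (1 / β) * log (1 - u) := by
  have : log (1 - u) ≤ 0 := log_nonpos (by linarith) (by linarith)
  have : 0 ≤ (1 / β) * -log (1 - u) := mul_nonneg (by positivity) (by linarith)
  linarith

lemma weibullExtQuantile_pos (hβ : 0 < β) (hu0 : 0 < u) (hu1 : u < 1) :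
    0 < weibullExtQuantile α β u := by
  have hlog : log (1 - u) < 0 := log_neg (by linarith) (by linarith)
  have : 0 < (1 / β) * -log (1 - u) := mul_pos (by positivity) (by linarith)
  exact rpow_pos_of_pos (log_pos (by linarith)) _

lemma one_sub_exp_weibullExtQuantile (hα : α ≠ 0) (hβ : 0 < β) (hu0 : 0 ≤ u) (hu1 : u < 1) :
    1 - exp (-β * (exp (weibullExtQuantile α β u ^ α) - 1)) = u := by
  have hL := one_le_one_sub_div_mul_log hβ hu0 hu1
  have hpow : weibullExtQuantile α β u ^ α = log (1 - (1 / β) * log (1 - u)) := by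
    rw [weibullExtQuantile, one_div α, rpow_inv_rpow (log_nonneg hL) hα]
  have hexponent : -β * (exp (weibullExtQuantile α β u ^ α) - 1) = log (1 - u) := by
    rw [hpow, exp_log (by linarith)]
    field_simp
    ring
  rw [hexponent, exp_log (by linarith)]
  ring

end WeibullExtension

lemma rpow_two_mul {x : ℝ} (hx : 0 ≤ x) (y : ℝ) : x ^ (2 * y) = (x ^ y) ^ 2 := by
  rw [mul_comm, ← rpow_mul_natCast hx y 2, Nat.cast_ofNat]

theorem gtwe_quantile (α β θ lam p A Q : ℝ)
    (hα : 0 < α) (hβ : 0 < β) (hθ : 0 < θ)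
    (hlam0 : lam ≠ 0)
    (hp : p ∈ Set.Ioo (0 : ℝ) 1)
    (hA : A = ((1 + lam) - Real.sqrt ((1 + lam) ^ 2 - 4 * p * lam)) / (2 * lam))
    (hQ : Q = (Real.log (1 - (1 / β) * Real.log (1 - A ^ (1 / θ)))) ^ (1 / α)) :
    0 < Q ∧
      (1 + lam) * (1 - Real.exp (-β * (Real.exp (Q ^ α) - 1))) ^ θ
        - lam * (1 - Real.exp (-β * (Real.exp (Q ^ α) - 1))) ^ (2 * θ) = p := by
  obtain ⟨hp0, hp1⟩ := hp
  replace hA : A = transmutedQuantile lam p := hA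
  replace hQ : Q = weibullExtQuantile α β (A ^ (1 / θ)) := hQ
  have hA0 : 0 < A := hA ▸ transmutedQuantile_pos hlam0 hp0 hp1
  have hA1 : A < 1 := hA ▸ transmutedQuantile_lt_one hlam0 hp0.le hp1
  have huθ : (A ^ (1 / θ)) ^ θ = A := by rw [one_div, rpow_inv_rpow hA0.le hθ.ne']
  set u := A ^ (1 / θ)
  have hu0 : 0 < u := rpow_pos_of_pos hA0 _
  have hu1 : u < 1 := rpow_lt_one hA0.le hA1 (by positivity)
  refine ⟨hQ ▸ weibullExtQuantile_pos hβ hu0 hu1, ?_⟩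
  rw [hQ, one_sub_exp_weibullExtQuantile hα.ne' hβ hu0.le hu1, rpow_two_mul hu0.le, huθ, hA]
  exact transmuted_transmutedQuantile hlam0 hp0.le hp1.le
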